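/- arXiv:1504.07851 — 5 statements merged into one kernel-verified Lean document; each statement's English description precedes it below -/
import Mathlib

section
/- Let R and S be strings over an alphabet Σ, let C_max be a maximal cover of S with respect to R, and let C be an arbitrary cover of S with respect to R. Then |C_max| ≤ 2|C| − 1. -/
/-!
Mark the block boundaries of both covers as positions in `S`. To each block of `C_max` attach the
sum of the indices of the blocks of `C` containing its first and its last letter. By maximality no
two consecutive blocks of `C_max` lie inside a single block of `C`, so this sum increases strictly
from each block of `C_max` to the next; since it takes values in `0, …, 2 (|C| - 1)`, there are at
most `2 |C| - 1` blocks in `C_max`.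
-/

/-- `sub R i j` is the substring `R[i..j]` of `R` (1-indexed, inclusive). -/
def sub {σ : Type*} (R : List σ) (i j : ℕ) : List σ := (R.drop (i - 1)).take (j - i + 1)

/-- `x` is a substring of `R`. -/
def IsSubstring {σ : Type*} (x R : List σ) : Prop := ∃ u v, R = u ++ x ++ v

/-- The string of `R` referred to by a block `(i, j)`. -/
def blockStr {σ : Type*} (R : List σ) (b : ℕ × ℕ) : List σ := sub R b.1 b.2

/-- `C` is a cover (relative compression) of `S` with respect to `R`. -/
def IsCover {σ : Type*} (R S : List σ) (C : List (ℕ × ℕ)) : Prop :=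
  (∀ b ∈ C, 1 ≤ b.1 ∧ b.1 ≤ b.2 ∧ b.2 ≤ R.length) ∧
  S = (C.map (blockStr R)).flatten

/-- A cover is maximal if no two consecutive blocks concatenate to a substring of `R`. -/
def IsMaximal {σ : Type*} (R : List σ) (C : List (ℕ × ℕ)) : Prop :=
  ∀ l : ℕ, ∀ h : l + 1 < C.length,
    ¬ IsSubstring (blockStr R (C[l]'(by omega)) ++ blockStr R (C[l + 1]'h)) R

namespace RelativeCompression

section BlockIndex

variable {p : ℕ → ℕ} {m x : ℕ}

def blockIndex (p : ℕ → ℕ) (m x : ℕ) : ℕ := Nat.findGreatest (fun j => p j ≤ x) m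

theorem blockIndex_monotone : Monotone (blockIndex p m) := fun _ _ hxy =>
  Nat.findGreatest_mono_left (fun _ hj => hj.trans hxy) m

theorem apply_blockIndex_le (h0 : p 0 ≤ x) : p (blockIndex p m x) ≤ x :=
  Nat.findGreatest_spec (P := fun j => p j ≤ x) m.zero_le h0

theorem blockIndex_lt (h0 : p 0 ≤ x) (hx : x < p m) : blockIndex p m x < m := by
  refine (Nat.findGreatest_le m).lt_of_ne fun h => ?_
  have := apply_blockIndex_le (m := m) h0
  rw [blockIndex, h] at this
  omega

theorem le_blockIndex {j : ℕ} (hj : j ≤ m) (h : p j ≤ x) : j ≤ blockIndex p m x :=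
  Nat.le_findGreatest hj h

end BlockIndex

theorem le_two_mul_sub_one_of_pairs_cross {p q : ℕ → ℕ} {m n : ℕ} (hq : Monotone q)
    (hq_lt : ∀ k < n, q k < q (k + 1)) (h0 : p 0 ≤ q 0) (hn : q n ≤ p m)
    (hcross : ∀ k j, k + 1 < n → j < m → p j ≤ q k → p (j + 1) < q (k + 2)) :
    n ≤ 2 * m - 1 := by
  have hp0 : ∀ k, p 0 ≤ q k := fun k => h0.trans (hq k.zero_le)
  have hlt_pm : ∀ k < n, q k < p m := fun k hk => (hq_lt k hk).trans_le ((hq hk).trans hn)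
  let φ (k : ℕ) : ℕ := blockIndex p m (q k) + blockIndex p m (q (k + 1) - 1)
  have hstep : ∀ k, k + 1 < n → φ k < φ (k + 1) := by
    intro k hk
    have hj := blockIndex_lt (hp0 k) (hlt_pm k (by omega))
    have hcr := hcross k _ hk hj (apply_blockIndex_le (hp0 k))
    have hlast : blockIndex p m (q k) + 1 ≤ blockIndex p m (q (k + 2) - 1) :=
      le_blockIndex hj (by omega)
    have hfirst : blockIndex p m (q (k + 1) - 1) ≤ blockIndex p m (q (k + 1)) :=
      blockIndex_monotone (Nat.sub_le _ _)
    show _ + _ < blockIndex p m (q (k + 1)) + blockIndex p m (q (k + 2) - 1)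
    omega
  have hlow : ∀ k < n, k ≤ φ k := by
    intro k hk
    induction k with
    | zero => exact Nat.zero_le _
    | succ k ih => exact (ih (by omega)).trans_lt (hstep k hk)
  obtain rfl | hpos := Nat.eq_zero_or_pos n
  · exact Nat.zero_le _
  have hq_last := hq_lt (n - 1) (by omega)
  rw [Nat.sub_add_cancel hpos] at hq_last
  have hfirst := blockIndex_lt (hp0 (n - 1)) (hlt_pm (n - 1) (by omega))
  have hlast : blockIndex p m (q n - 1) < m :=
    blockIndex_lt (by have := hp0 (n - 1); omega) (by omega)
  have := hlow (n - 1) (by omega)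
  simp only [φ, Nat.sub_add_cancel hpos] at this
  omega

section Offset

variable {σ : Type*}

def offset (L : List (List σ)) (k : ℕ) : ℕ := ((L.map List.length).take k).sum

theorem offset_add (L : List (List σ)) (a t : ℕ) :
    offset L (a + t) = offset L a + offset (L.drop a) t := by
  simp [offset, List.take_add, List.map_drop]

theorem offset_monotone (L : List (List σ)) : Monotone (offset L) := fun a b hab => by
  obtain ⟨t, rfl⟩ := Nat.exists_eq_add_of_le hab
  rw [offset_add]
  exact Nat.le_add_right _ _

theorem offset_length (L : List (List σ)) : offset L L.length = L.flatten.length := by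
  rw [offset, List.take_of_length_le (by simp), List.length_flatten]

theorem offset_lt_offset_succ {L : List (List σ)} (hL : [] ∉ L) {k : ℕ} (hk : k < L.length) :
    offset L k < offset L (k + 1) := by
  rw [offset_add, List.drop_eq_getElem_cons hk]
  have hpos : 0 < L[k].length := List.length_pos_iff.mpr fun h => hL (h ▸ L.getElem_mem hk)
  simp only [offset, List.map_cons, List.take_succ_cons, List.take_zero, List.sum_cons,
    List.sum_nil]
  omega

theorem extract_offset (L : List (List σ)) (a t : ℕ) :
    L.flatten.extract (offset L a) (offset L (a + t)) = ((L.drop a).take t).flatten := by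
  rw [List.extract_eq_take_drop, offset_add, Nat.add_sub_cancel_left]
  unfold offset
  rw [List.drop_sum_flatten, List.take_sum_flatten]

theorem extract_infix_extract (S : List σ) {a b c d : ℕ} (hca : c ≤ a) (hbd : b ≤ d) :
    S.extract a b <:+: S.extract c d := by
  have : S.extract a b = ((S.extract c d).drop (a - c)).take (b - a) := by
    rw [List.extract_eq_take_drop, List.extract_eq_take_drop, List.drop_take, List.drop_drop,
      List.take_take, Nat.add_sub_cancel' hca, min_eq_left (by omega)]
  rw [this]
  exact (List.take_prefix _ _).isInfix.trans (List.drop_suffix _ _).isInfix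

end Offset

section Flatten

variable {σ : Type*}

theorem append_infix_of_offset_within {X Y : List (List σ)} (hXY : X.flatten = Y.flatten)
    {k j : ℕ} (hk : k + 1 < X.length) (hj : j < Y.length)
    (hstart : offset Y j ≤ offset X k) (hend : offset X (k + 2) ≤ offset Y (j + 1)) :
    X[k] ++ X[k + 1] <:+: Y[j] := by
  have hpair : X.flatten.extract (offset X k) (offset X (k + 2)) = X[k] ++ X[k + 1] := by
    rw [extract_offset, List.drop_eq_getElem_cons (by omega : k < X.length),
      List.drop_eq_getElem_cons hk]
    simp only [List.take_succ_cons, List.take_zero, List.flatten_cons, List.flatten_nil,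
      List.append_nil]
  have hblock : Y.flatten.extract (offset Y j) (offset Y (j + 1)) = Y[j] := by
    rw [extract_offset, List.drop_eq_getElem_cons hj]
    simp only [List.take_succ_cons, List.take_zero, List.flatten_cons, List.flatten_nil,
      List.append_nil]
  rw [← hpair, ← hblock, hXY]
  exact extract_infix_extract _ hstart hend

theorem length_le_two_mul_sub_one_of_flatten_eq {X Y : List (List σ)} (hX : [] ∉ X)
    (hXY : X.flatten = Y.flatten)
    (hpair : ∀ k (hk : k + 1 < X.length), ∀ y ∈ Y, ¬ X[k] ++ X[k + 1] <:+: y) :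
    X.length ≤ 2 * Y.length - 1 :=
  le_two_mul_sub_one_of_pairs_cross (p := offset Y) (offset_monotone X)
    (fun _ hk => offset_lt_offset_succ hX hk) (Nat.zero_le _)
    (by rw [offset_length, offset_length, hXY]) fun k j hk hj hstart => by
      by_contra hend
      exact hpair k hk _ (Y.getElem_mem hj)
        (append_infix_of_offset_within hXY hk hj hstart (not_lt.mp hend))

end Flatten

section Blocks

variable {σ : Type*}

theorem isSubstring_iff_infix {x R : List σ} : IsSubstring x R ↔ x <:+: R := by
  simp only [IsSubstring, List.IsInfix, eq_comm]

theorem blockStr_infix (R : List σ) (b : ℕ × ℕ) : blockStr R b <:+: R :=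
  (List.take_prefix _ _).isInfix.trans (List.drop_suffix _ _).isInfix

theorem blockStr_ne_nil {R : List σ} {b : ℕ × ℕ} (h1 : 1 ≤ b.1) (h : b.1 ≤ R.length) :
    blockStr R b ≠ [] := by
  rw [← List.length_pos_iff, blockStr, sub, List.length_take, List.length_drop]
  omega

end Blocks

end RelativeCompression

open RelativeCompression in
/-- If `C_max` is a maximal cover and `C` an arbitrary cover of `S` w.r.t. `R`,
then `|C_max| ≤ 2|C| - 1`. -/
theorem maximal_cover_le {σ : Type*} (R S : List σ) (Cmax C : List (ℕ × ℕ))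
    (hmax : IsCover R S Cmax) (hmaxmax : IsMaximal R Cmax)
    (hC : IsCover R S C) :
    Cmax.length ≤ 2 * C.length - 1 := by
  obtain ⟨hvalid, rfl⟩ := hmax
  have hne : [] ∉ Cmax.map (blockStr R) := by
    simp only [List.mem_map, not_exists, not_and]
    intro b hb
    obtain ⟨h1, h12, h2⟩ := hvalid b hb
    exact blockStr_ne_nil h1 (h12.trans h2)
  have hpair : ∀ k (hk : k + 1 < (Cmax.map (blockStr R)).length), ∀ y ∈ C.map (blockStr R),
      ¬ (Cmax.map (blockStr R))[k] ++ (Cmax.map (blockStr R))[k + 1] <:+: y := by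
    rintro k hk _ hy hinf
    obtain ⟨c, -, rfl⟩ := List.mem_map.mp hy
    rw [List.length_map] at hk
    apply hmaxmax k hk
    rw [isSubstring_iff_infix]
    simpa using hinf.trans (blockStr_infix R c)
  simpa using length_le_two_mul_sub_one_of_flatten_eq hne hC.2 hpair
end

section
/- Let R and S be strings over an alphabet Σ, let C_max be a maximal cover of S with respect to R, and let C = ((i_1,j_1),…,(i_m,j_m)) be an arbitrary cover of S with respect to R. Then for every block index 1 ≤ l ≤ m, at most two blocks of C_max have their start position in S lying within the span of the l-th block of C, i.e., at most two blocks of C_max start at a position p with p_l ≤ p ≤ p_l + (j_l − i_l), where p_l = 1 + Σ_{k<l}(j_k − i_k + 1). -/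
/-- The length of the block `(i, j)`, i.e. `j - i + 1`. -/
def blockLen (b : ℕ × ℕ) : ℕ := b.2 - b.1 + 1

/-- The (1-indexed) start position in `S` of the block of `C` with 0-based index `l`,
i.e. `p_{l+1} = 1 + Σ_{k ≤ l} (j_k - i_k + 1)` in 1-indexed notation. -/
def startPos (C : List (ℕ × ℕ)) (l : ℕ) : ℕ := 1 + ((C.take l).map blockLen).sum

/-!
If three blocks of `C_max` started inside the `l`-th block of `C`, then the first two of them
would end before the third starts, hence lie entirely inside that block. Their concatenation
would then be a substring of the block, and so of `R`, against the maximality of `C_max`.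
-/

theorem Finset.exists_add_two_le_of_two_lt_card {s : Finset ℕ} (hs : 2 < s.card) :
    ∃ a ∈ s, ∃ c ∈ s, a + 2 ≤ c := by
  have hne : s.Nonempty := Finset.card_pos.mp (by omega)
  refine ⟨s.min' hne, s.min'_mem hne, s.max' hne, s.max'_mem hne, ?_⟩
  have hsub : s ⊆ Finset.Icc (s.min' hne) (s.max' hne) := fun x hx =>
    Finset.mem_Icc.mpr ⟨s.min'_le x hx, s.le_max' x hx⟩
  have := Finset.card_le_card hsub
  rw [Nat.card_Icc] at this
  omega

theorem List.take_drop_isInfix_take_drop {α : Type*} (L : List α) {p q m n : ℕ}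
    (hpq : p ≤ q) (hqn : q + n ≤ p + m) :
    (L.drop q).take n <:+: (L.drop p).take m := by
  have heq : (L.drop q).take n = (((L.drop p).take m).drop (q - p)).take n := by
    rw [List.drop_take, List.drop_drop, Nat.add_sub_cancel' hpq, List.take_take,
      Nat.min_eq_left (by omega)]
  rw [heq]
  exact (List.take_prefix _ _).isInfix.trans (List.drop_suffix _ _).isInfix

section Cover

variable {σ : Type*} {R S : List σ} {C : List (ℕ × ℕ)}

theorem isSubstring_iff_isInfix {x : List σ} : IsSubstring x R ↔ x <:+: R :=
  ⟨fun ⟨u, v, h⟩ => ⟨u, v, h.symm⟩, fun ⟨u, v, h⟩ => ⟨u, v, h.symm⟩⟩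

theorem blockStr_isInfix (R : List σ) (b : ℕ × ℕ) : blockStr R b <:+: R :=
  (List.take_prefix _ _).isInfix.trans (List.drop_suffix _ _).isInfix

theorem length_blockStr {b : ℕ × ℕ} (hb : 1 ≤ b.1 ∧ b.1 ≤ b.2 ∧ b.2 ≤ R.length) :
    (blockStr R b).length = blockLen b := by
  simp only [blockStr, sub, blockLen, List.length_take, List.length_drop]
  omega

theorem length_flatten_map_blockStr {D : List (ℕ × ℕ)}
    (hD : ∀ b ∈ D, 1 ≤ b.1 ∧ b.1 ≤ b.2 ∧ b.2 ≤ R.length) :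
    (D.map (blockStr R)).flatten.length = (D.map blockLen).sum := by
  rw [List.length_flatten, List.map_map]
  exact congrArg _ (List.map_congr_left fun b hb => length_blockStr (hD b hb))

theorem one_le_startPos (C : List (ℕ × ℕ)) (l : ℕ) : 1 ≤ startPos C l :=
  Nat.le_add_right 1 _

theorem startPos_add_one {l : ℕ} (hl : l < C.length) :
    startPos C (l + 1) = startPos C l + blockLen C[l] := by
  simp only [startPos, List.take_succ_eq_append_getElem hl, List.map_append, List.sum_append,
    List.map_cons, List.map_nil, List.sum_cons, List.sum_nil]
  omega

theorem startPos_mono : Monotone (startPos C) := fun _ _ h =>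
  Nat.add_le_add_left (((List.take_prefix_take_left h).map blockLen).sublist.sum_le_sum
    fun _ _ => Nat.zero_le _) 1

theorem IsCover.drop_startPos (hC : IsCover R S C) (l : ℕ) :
    S.drop (startPos C l - 1) = ((C.drop l).map (blockStr R)).flatten := by
  have hsplit :
      S = ((C.take l).map (blockStr R)).flatten ++ ((C.drop l).map (blockStr R)).flatten := by
    rw [hC.2, ← List.flatten_append, ← List.map_append, List.take_append_drop]
  rw [startPos, Nat.add_sub_cancel_left, hsplit,
    List.drop_left' (length_flatten_map_blockStr fun b hb => hC.1 b (List.mem_of_mem_take hb))]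

theorem IsCover.flatten_take_drop (hC : IsCover R S C) (l k : ℕ) :
    (((C.drop l).take k).map (blockStr R)).flatten =
      (S.drop (startPos C l - 1)).take (((C.drop l).take k).map blockLen).sum := by
  have hvalid : ∀ b ∈ (C.drop l).take k, 1 ≤ b.1 ∧ b.1 ≤ b.2 ∧ b.2 ≤ R.length :=
    fun b hb => hC.1 b (List.mem_of_mem_drop (List.mem_of_mem_take hb))
  rw [hC.drop_startPos, ← List.take_append_drop k (C.drop l), List.map_append,
    List.flatten_append, List.take_append_drop,
    List.take_left' (length_flatten_map_blockStr hvalid)]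

theorem IsCover.blockStr_getElem (hC : IsCover R S C) {l : ℕ} (hl : l < C.length) :
    blockStr R C[l] = (S.drop (startPos C l - 1)).take (blockLen C[l]) := by
  have h := hC.flatten_take_drop l 1
  rw [List.drop_eq_getElem_cons hl] at h
  simpa only [List.take_succ_cons, List.take_zero, List.map_cons, List.map_nil, List.flatten_cons,
    List.flatten_nil, List.append_nil, List.sum_cons, List.sum_nil, add_zero] using h

theorem IsCover.blockStr_getElem_append (hC : IsCover R S C) {l : ℕ} (hl : l + 1 < C.length) :
    blockStr R C[l] ++ blockStr R C[l + 1] =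
      (S.drop (startPos C l - 1)).take (blockLen C[l] + blockLen C[l + 1]) := by
  have h := hC.flatten_take_drop l 2
  rw [List.drop_eq_getElem_cons (Nat.lt_of_succ_lt hl), List.drop_eq_getElem_cons hl] at h
  simpa only [List.take_succ_cons, List.take_zero, List.map_cons, List.map_nil, List.flatten_cons,
    List.flatten_nil, List.append_nil, List.sum_cons, List.sum_nil, add_zero] using h

theorem IsCover.blockStr_append_isInfix {D : List (ℕ × ℕ)} (hC : IsCover R S C)
    (hD : IsCover R S D) {l a : ℕ} (hl : l < C.length) (ha : a + 1 < D.length)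
    (hstart : startPos C l ≤ startPos D a) (hend : startPos D (a + 2) ≤ startPos C (l + 1)) :
    blockStr R D[a] ++ blockStr R D[a + 1] <:+: blockStr R C[l] := by
  rw [startPos_add_one ha, startPos_add_one (Nat.lt_of_succ_lt ha), startPos_add_one hl] at hend
  rw [hD.blockStr_getElem_append ha, hC.blockStr_getElem hl]
  have := one_le_startPos C l
  exact List.take_drop_isInfix_take_drop S (by omega) (by omega)

end Cover

/-- At most two blocks of a maximal cover `C_max` start at a position lying within the
span of any single block of an arbitrary cover `C`. -/
theorem at_most_two_blocks_start_in_block {σ : Type*} (R S : List σ)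
    (Cmax C : List (ℕ × ℕ))
    (hmax : IsCover R S Cmax) (hmaxmax : IsMaximal R Cmax)
    (hC : IsCover R S C) :
    ∀ l : ℕ, ∀ h : l < C.length,
      ((Finset.range Cmax.length).filter (fun l' =>
          startPos C l ≤ startPos Cmax l' ∧
          startPos Cmax l' ≤ startPos C l + ((C[l]'h).2 - (C[l]'h).1))).card ≤ 2 := by
  intro l hl
  by_contra! hcard
  obtain ⟨a, ha, c, hc, hac⟩ := Finset.exists_add_two_le_of_two_lt_card hcard
  simp only [Finset.mem_filter, Finset.mem_range] at ha hc
  have hlen : a + 1 < Cmax.length := by omega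
  have hend : startPos Cmax (a + 2) ≤ startPos C (l + 1) :=
    calc startPos Cmax (a + 2) ≤ startPos Cmax c := startPos_mono hac
      _ ≤ startPos C l + (C[l].2 - C[l].1) := hc.2.2
      _ ≤ startPos C (l + 1) := by rw [startPos_add_one hl, blockLen]; omega
  exact hmaxmax a hlen (isSubstring_iff_isInfix.mpr
    ((hC.blockStr_append_isInfix hmax hl hlen ha.2.1 hend).trans (blockStr_isInfix R _)))
end

section
/- Let R and S be strings over an alphabet Σ with S nonempty, and suppose every character of S occurs in R. Then there exists a maximal cover of S with respect to R. In particular, the cover obtained by greedily and repeatedly taking as the next block the longest prefix of the remaining suffix of S that is a substring of R is a maximal cover. -/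
/-- The character `α` occurs in `R`, i.e. `[α] = R[i..i]` for some `1 ≤ i ≤ |R|`. -/
def OccursIn {σ : Type*} (α : σ) (R : List σ) : Prop :=
  ∃ i, 1 ≤ i ∧ i ≤ R.length ∧ [α] = sub R i i

/-- `C` is the greedy cover of `S` w.r.t. `R`: each block is a longest prefix of the
remaining suffix of `S` that is a substring of `R`. -/
def IsGreedy {σ : Type*} (R S : List σ) (C : List (ℕ × ℕ)) : Prop :=
  ∀ l : ℕ, ∀ h : l < C.length, ∀ x : List σ,
    x <+: S.drop (startPos C l - 1) → IsSubstring x R →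
      x.length ≤ blockLen (C[l]'h)

/-
A greedy block is a longest prefix of the remaining suffix that occurs in `R`. If two
consecutive greedy blocks `x, y` had `x ++ y` occurring in `R`, then `x ++ y` would be a longer
prefix of that suffix occurring in `R`, contradicting the choice of `x`. A greedy cover exists
because every character of `S` occurs in `R`, so each greedy block is nonempty.
-/

section Cover

variable {σ : Type*}

theorem isSubstring_nil (R : List σ) : IsSubstring [] R := ⟨[], R, by simp⟩

theorem OccursIn.isSubstring {α : σ} {R : List σ} (h : OccursIn α R) : IsSubstring [α] R := by
  obtain ⟨i, hi, -, hα⟩ := h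
  refine ⟨R.take (i - 1), R.drop i, ?_⟩
  have hdrop : R.drop i = (R.drop (i - 1)).drop 1 := by
    rw [List.drop_drop]; congr 1; omega
  rw [hα, sub, hdrop, Nat.sub_self, List.append_assoc, List.take_append_drop,
    List.take_append_drop]

theorem IsSubstring.exists_blockStr_eq {x R : List σ} (h : IsSubstring x R) (hx : x ≠ []) :
    ∃ b : ℕ × ℕ, (1 ≤ b.1 ∧ b.1 ≤ b.2 ∧ b.2 ≤ R.length) ∧ blockStr R b = x := by
  obtain ⟨u, v, rfl⟩ := h
  have hx : 0 < x.length := List.length_pos_iff.mpr hx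
  refine ⟨(u.length + 1, u.length + x.length), ⟨by simp, by simp; omega, by simp⟩, ?_⟩
  simp only [blockStr, sub, Nat.add_sub_cancel, List.append_assoc, List.drop_left]
  rw [show u.length + x.length - (u.length + 1) + 1 = x.length by omega, List.take_left]

theorem blockStr_length (R : List σ) {b : ℕ × ℕ} (h : 1 ≤ b.1 ∧ b.1 ≤ b.2 ∧ b.2 ≤ R.length) :
    (blockStr R b).length = blockLen b := by
  simp only [blockStr, sub, blockLen, List.length_take, List.length_drop]
  omega

theorem IsCover.drop_startPos_eq {R S : List σ} {C : List (ℕ × ℕ)} (hC : IsCover R S C)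
    (l : ℕ) : S.drop (startPos C l - 1) = ((C.drop l).map (blockStr R)).flatten := by
  have hlen : (((C.take l).map (blockStr R)).flatten).length = startPos C l - 1 := by
    rw [List.length_flatten, List.map_map, startPos, Nat.add_sub_cancel_left]
    exact congrArg List.sum <| List.map_congr_left fun b hb =>
      blockStr_length R (hC.1 b (List.mem_of_mem_take hb))
  have hsplit : S =
      ((C.take l).map (blockStr R)).flatten ++ ((C.drop l).map (blockStr R)).flatten := by
    rw [← List.flatten_append, ← List.map_append, List.take_append_drop, hC.2]
  rw [hsplit, ← hlen, List.drop_left]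

theorem IsGreedy.isMaximal {R S : List σ} {C : List (ℕ × ℕ)} (hC : IsCover R S C)
    (hG : IsGreedy R S C) : IsMaximal R C := by
  intro l h hsub
  have hl : l < C.length := by omega
  have hpre : blockStr R C[l] ++ blockStr R C[l + 1] <+: S.drop (startPos C l - 1) := by
    rw [hC.drop_startPos_eq, List.drop_eq_getElem_cons hl, List.drop_eq_getElem_cons h]
    simp only [List.map_cons, List.flatten_cons, ← List.append_assoc]
    exact List.prefix_append _ _
  have hle := hG l hl _ hpre hsub
  rw [List.length_append, blockStr_length R (hC.1 _ (List.getElem_mem hl)),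
    blockStr_length R (hC.1 _ (List.getElem_mem h))] at hle
  simp only [blockLen] at hle
  omega

theorem exists_longest_prefix_isSubstring (R S : List σ) :
    ∃ k ≤ S.length, IsSubstring (S.take k) R ∧
      ∀ x, x <+: S → IsSubstring x R → x.length ≤ k := by
  classical
  let P k := IsSubstring (S.take k) R
  have hP0 : P 0 := by simpa [P] using isSubstring_nil R
  refine ⟨Nat.findGreatest P S.length, Nat.findGreatest_le _,
    Nat.findGreatest_spec (Nat.zero_le _) hP0, fun x hx hxR => ?_⟩
  refine Nat.le_findGreatest hx.length_le ?_
  simpa only [P, ← List.prefix_iff_eq_take.mp hx] using hxR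

theorem IsCover.cons {R S : List σ} {b : ℕ × ℕ} {C : List (ℕ × ℕ)}
    (hb : 1 ≤ b.1 ∧ b.1 ≤ b.2 ∧ b.2 ≤ R.length) (hbS : blockStr R b = S.take (blockLen b))
    (hC : IsCover R (S.drop (blockLen b)) C) : IsCover R S (b :: C) := by
  refine ⟨?_, ?_⟩
  · intro b' hb'
    rcases List.mem_cons.mp hb' with rfl | hb'
    exacts [hb, hC.1 b' hb']
  · rw [List.map_cons, List.flatten_cons, hbS, ← hC.2, List.take_append_drop]

theorem IsGreedy.cons {R S : List σ} {b : ℕ × ℕ} {C : List (ℕ × ℕ)}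
    (hb : ∀ x, x <+: S → IsSubstring x R → x.length ≤ blockLen b)
    (hC : IsGreedy R (S.drop (blockLen b)) C) : IsGreedy R S (b :: C) := by
  rintro (_ | l) hl x hx hxR
  · simpa [startPos] using hb x hx hxR
  · have hstart : startPos (b :: C) (l + 1) - 1 = blockLen b + (startPos C l - 1) := by
      simp only [startPos, List.take_succ_cons, List.map_cons, List.sum_cons]
      omega
    rw [hstart, ← List.drop_drop] at hx
    exact hC l (by simpa using hl) x hx hxR

theorem exists_isCover_isGreedy (R : List σ) :
    ∀ S : List σ, (∀ α ∈ S, OccursIn α R) → ∃ C, IsCover R S C ∧ IsGreedy R S C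
  | [], _ => ⟨[], ⟨by simp, by simp⟩, fun _ h => absurd h (by simp)⟩
  | a :: t, hocc => by
    obtain ⟨k, hkS, hkR, hk⟩ := exists_longest_prefix_isSubstring R (a :: t)
    have hk1 : 1 ≤ k := hk [a] (by simp) (hocc a (by simp)).isSubstring
    obtain ⟨b, hb, hbS⟩ :=
      hkR.exists_blockStr_eq (by simpa [List.take_eq_nil_iff] using Nat.one_le_iff_ne_zero.mp hk1)
    have hbk : blockLen b = k := by
      rw [← blockStr_length R hb, hbS, List.length_take]; omega
    have : ((a :: t).drop k).length < (a :: t).length := by simp; omega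
    obtain ⟨C, hC, hG⟩ :=
      exists_isCover_isGreedy R ((a :: t).drop k) fun α hα => hocc α (List.mem_of_mem_drop hα)
    subst hbk
    exact ⟨b :: C, hC.cons hb hbS, IsGreedy.cons hk hG⟩
termination_by S => S.length

end Cover

theorem greedy_cover_is_maximal_general {σ : Type*} (R S : List σ)
    (hocc : ∀ α ∈ S, OccursIn α R) :
    (∃ C, IsCover R S C ∧ IsGreedy R S C ∧ IsMaximal R C) ∧
    (∀ C, IsCover R S C → IsGreedy R S C → IsMaximal R C) := by
  obtain ⟨C, hC, hG⟩ := exists_isCover_isGreedy R S hocc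
  exact ⟨⟨C, hC, hG, hG.isMaximal hC⟩, fun _ hC hG => hG.isMaximal hC⟩

/-- If `S` is nonempty and all of its characters occur in `R`, then `S` has a maximal
cover w.r.t. `R`; in particular the greedy cover is a maximal cover. -/
theorem greedy_cover_is_maximal {σ : Type*} (R S : List σ) (hS : S ≠ [])
    (hocc : ∀ α ∈ S, OccursIn α R) :
    (∃ C, IsCover R S C ∧ IsGreedy R S C ∧ IsMaximal R C) ∧
    (∀ C, IsCover R S C → IsGreedy R S C → IsMaximal R C) :=
  greedy_cover_is_maximal_general R S hocc
end

section
/- Let R be a string of length r ≥ 1 over a linearly ordered alphabet Σ. The r nonempty suffixes of R (the suffix starting at position k, for 1 ≤ k ≤ r) are pairwise distinct; let rank(k) ∈ {1,…,r} denote the position of the suffix starting at k in the lexicographically sorted list of these suffixes. Then for every string y, the set { rank(k) : 1 ≤ k ≤ r and y is a prefix of the suffix of R starting at position k } is a set of consecutive integers (an interval). -/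
/-! Suffixes of `R` are distinct because they have distinct lengths. In the lexicographic order
the strings having `y` as a prefix form an order-convex set (a string squeezed between two
extensions of `y` must agree with them on the first `|y|` letters), and `rank` is an order
isomorphism onto `{1,…,r}`, so it carries this convex set of suffixes to an interval. -/

-- Mathlib's `List.LE'` hides core's `≤` on lists, so core's `List.cons_le_cons_iff` does not
-- rewrite it; the two agree definitionally, as `l ≤ l' ↔ ¬ l' < l`.
theorem List.cons_le_cons_iff' {σ : Type*} [LinearOrder σ] {a b : σ} {l l' : List σ} :
    a :: l ≤ b :: l' ↔ a < b ∨ a = b ∧ l ≤ l' := by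
  simp only [← not_lt]
  exact List.cons_le_cons_iff

theorem List.IsPrefix.of_le_of_le {σ : Type*} [LinearOrder σ] {y a b c : List σ}
    (ha : y <+: a) (hc : y <+: c) (hab : a ≤ b) (hbc : b ≤ c) : y <+: b := by
  induction y generalizing a b c with
  | nil => exact List.nil_prefix
  | cons x y ih =>
    obtain ⟨a, rfl, hya⟩ := List.cons_prefix_iff.mp ha
    obtain ⟨c, rfl, hyc⟩ := List.cons_prefix_iff.mp hc
    cases b with
    | nil => exact absurd hab (not_le.mpr List.Lex.nil)
    | cons z b =>
      rw [List.cons_le_cons_iff'] at hab hbc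
      rw [List.cons_prefix_cons]
      rcases hab with hxz | ⟨rfl, hab⟩
      · rcases hbc with hzx | ⟨rfl, -⟩
        · exact absurd hxz hzx.not_gt
        · exact absurd hxz (lt_irrefl z)
      · rcases hbc with hxx | ⟨-, hbc⟩
        · exact absurd hxx (lt_irrefl x)
        · exact ⟨rfl, ih hya hyc hab hbc⟩

theorem ranks_of_suffixes_with_prefix_form_interval_general {σ : Type*} [LinearOrder σ]
    (R : List σ)
    (rank : ℕ → ℕ)
    (hbij : Set.BijOn rank (Set.Icc 1 R.length) (Set.Icc 1 R.length))
    (hord : ∀ k ∈ Set.Icc 1 R.length, ∀ k' ∈ Set.Icc 1 R.length,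
      (rank k ≤ rank k' ↔ R.drop (k - 1) ≤ R.drop (k' - 1)))
    (y : List σ) :
    (∀ k ∈ Set.Icc 1 R.length, ∀ k' ∈ Set.Icc 1 R.length,
      R.drop (k - 1) = R.drop (k' - 1) → k = k') ∧
    (∀ p q t : ℕ,
      p ∈ {q' | ∃ k ∈ Set.Icc 1 R.length, y <+: R.drop (k - 1) ∧ q' = rank k} →
      t ∈ {q' | ∃ k ∈ Set.Icc 1 R.length, y <+: R.drop (k - 1) ∧ q' = rank k} →
      p ≤ q → q ≤ t →
      q ∈ {q' | ∃ k ∈ Set.Icc 1 R.length, y <+: R.drop (k - 1) ∧ q' = rank k}) := by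
  refine ⟨fun k hk k' hk' hdrop => ?_, ?_⟩
  · rw [List.drop_eq_drop_iff] at hdrop
    simp only [Set.mem_Icc] at hk hk'
    omega
  · rintro p q t ⟨kp, hkp, hyp, rfl⟩ ⟨kt, hkt, hyt, rfl⟩ hpq hqt
    have hq : q ∈ Set.Icc 1 R.length :=
      Set.Icc_subset_Icc (hbij.mapsTo hkp).1 (hbij.mapsTo hkt).2 ⟨hpq, hqt⟩
    obtain ⟨k, hk, rfl⟩ := hbij.surjOn hq
    have hle₁ := (hord kp hkp k hk).mp hpq
    have hle₂ := (hord k hk kt hkt).mp hqt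
    exact ⟨k, hk, hyp.of_le_of_le hyt hle₁ hle₂, rfl⟩

/-- Let `R` be a nonempty string over a linearly ordered alphabet. Its nonempty suffixes
(the suffix starting at 1-indexed position `k` is `R.drop (k-1)`) are pairwise distinct.
Moreover, for any ranking `rank` of the starting positions that sorts the suffixes
lexicographically (a bijection of `{1,…,r}` such that `rank k ≤ rank k'` iff the suffix
at `k` is lexicographically at most the suffix at `k'`), and for any string `y`, the set
of ranks of suffixes having `y` as a prefix is a set of consecutive integers. -/
theorem ranks_of_suffixes_with_prefix_form_interval {σ : Type*} [LinearOrder σ]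
    (R : List σ) (hr : 1 ≤ R.length)
    (rank : ℕ → ℕ)
    (hbij : Set.BijOn rank (Set.Icc 1 R.length) (Set.Icc 1 R.length))
    (hord : ∀ k ∈ Set.Icc 1 R.length, ∀ k' ∈ Set.Icc 1 R.length,
      (rank k ≤ rank k' ↔ R.drop (k - 1) ≤ R.drop (k' - 1)))
    (y : List σ) :
    (∀ k ∈ Set.Icc 1 R.length, ∀ k' ∈ Set.Icc 1 R.length,
      R.drop (k - 1) = R.drop (k' - 1) → k = k') ∧
    (∀ p q t : ℕ,
      p ∈ {q' | ∃ k ∈ Set.Icc 1 R.length, y <+: R.drop (k - 1) ∧ q' = rank k} →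
      t ∈ {q' | ∃ k ∈ Set.Icc 1 R.length, y <+: R.drop (k - 1) ∧ q' = rank k} →
      p ≤ q → q ≤ t →
      q ∈ {q' | ∃ k ∈ Set.Icc 1 R.length, y <+: R.drop (k - 1) ∧ q' = rank k}) :=
  ranks_of_suffixes_with_prefix_form_interval_general R rank hbij hord y
end

section
/- Let R and S be strings over an alphabet Σ with |S| ≥ 2, let C be a cover of S with respect to R of size m, and let 1 ≤ i ≤ |S|. Then the string obtained from S by deleting its i-th character has a cover with respect to R of size at most m + 1. -/
/-! The character deleted lies in a single block `R[p..q]`; what remains of that block is the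
prefix `R[p..p+k-1]` and the suffix `R[p+k+1..q]`, each of which is a block or empty. All other
blocks are kept, so the cover grows by at most one block. -/

/-- A pair `(p, q)` with `q < p` must be dropped rather than kept: it would still denote one
character, since `sub` truncates `q - p` to `0`. -/
def blockOrNil (p q : ℕ) : List (ℕ × ℕ) := if p ≤ q then [(p, q)] else []

lemma length_blockOrNil_le (p q : ℕ) : (blockOrNil p q).length ≤ 1 := by
  unfold blockOrNil; split_ifs <;> simp

namespace IsCover

variable {σ : Type*} {R S T : List σ} {C D : List (ℕ × ℕ)}

lemma nil : IsCover R [] [] := by simp [IsCover]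

lemma singleton {b : ℕ × ℕ} (hb : 1 ≤ b.1 ∧ b.1 ≤ b.2 ∧ b.2 ≤ R.length) :
    IsCover R (blockStr R b) [b] := by
  simpa [IsCover] using hb

lemma append (hC : IsCover R S C) (hD : IsCover R T D) : IsCover R (S ++ T) (C ++ D) := by
  refine ⟨fun b hb => ?_, by rw [hC.2, hD.2]; simp⟩
  rcases List.mem_append.mp hb with hb | hb
  exacts [hC.1 b hb, hD.1 b hb]

lemma blockOrNil {p q : ℕ} (hp : 1 ≤ p) (hq : q ≤ R.length) :
    IsCover R ((R.drop (p - 1)).take (q + 1 - p)) (blockOrNil p q) := by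
  unfold _root_.blockOrNil
  split_ifs with hpq
  · have := singleton (R := R) (b := (p, q)) ⟨hp, hpq, hq⟩
    rwa [blockStr, sub, show q - p + 1 = q + 1 - p by omega] at this
  · rw [show q + 1 - p = 0 by omega, List.take_zero]
    exact nil

lemma eraseIdx_blockStr {b : ℕ × ℕ} (hb : 1 ≤ b.1 ∧ b.1 ≤ b.2 ∧ b.2 ≤ R.length) {k : ℕ}
    (hk : k < (blockStr R b).length) :
    ∃ D, IsCover R ((blockStr R b).eraseIdx k) D ∧ D.length ≤ 2 := by
  obtain ⟨p, q⟩ := b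
  obtain ⟨hp, hpq, hq⟩ := hb
  have hkq : k < q - p + 1 := by simp [blockStr, sub] at hk; omega
  have hprefix : (blockStr R (p, q)).take k = (R.drop (p - 1)).take (p + k - 1 + 1 - p) := by
    rw [blockStr, sub, List.take_take, show min k (q - p + 1) = p + k - 1 + 1 - p by omega]
  have hsuffix : (blockStr R (p, q)).drop (k + 1) =
      (R.drop (p + k + 1 - 1)).take (q + 1 - (p + k + 1)) := by
    rw [blockStr, sub, List.drop_take, List.drop_drop,
      show p - 1 + (k + 1) = p + k + 1 - 1 by omega,
      show q - p + 1 - (k + 1) = q + 1 - (p + k + 1) by omega]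
  refine ⟨_root_.blockOrNil p (p + k - 1) ++ _root_.blockOrNil (p + k + 1) q, ?_, ?_⟩
  · rw [List.eraseIdx_eq_take_drop_succ, hprefix, hsuffix]
    exact (blockOrNil hp (by omega)).append (blockOrNil (by omega) hq)
  · have := length_blockOrNil_le p (p + k - 1)
    have := length_blockOrNil_le (p + k + 1) q
    simp only [List.length_append]
    omega

theorem exists_eraseIdx (hC : IsCover R S C) (k : ℕ) :
    ∃ C', IsCover R (S.eraseIdx k) C' ∧ C'.length ≤ C.length + 1 := by
  induction C generalizing S k with
  | nil => exact ⟨[], by simpa [hC.2] using nil, by simp⟩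
  | cons b C ih =>
    have hb := hC.1 b List.mem_cons_self
    have hrest : IsCover R (C.map (blockStr R)).flatten C :=
      ⟨fun d hd => hC.1 d (List.mem_cons_of_mem b hd), rfl⟩
    have hS : S = blockStr R b ++ (C.map (blockStr R)).flatten := by simpa using hC.2
    rw [hS]
    by_cases hk : k < (blockStr R b).length
    · obtain ⟨D, hD, hDlen⟩ := eraseIdx_blockStr hb hk
      refine ⟨D ++ C, ?_, by simp only [List.length_append, List.length_cons]; omega⟩
      rw [List.eraseIdx_append_of_lt_length hk]
      exact hD.append hrest
    · obtain ⟨C', hC', hC'len⟩ := ih hrest (k - (blockStr R b).length)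
      refine ⟨b :: C', ?_, by simp only [List.length_cons]; omega⟩
      rw [List.eraseIdx_append_of_length_le (not_lt.mp hk)]
      exact (singleton hb).append hC'

end IsCover

theorem delete_cover_general {σ : Type*} (R S : List σ) (C : List (ℕ × ℕ))
    (hC : IsCover R S C) (i : ℕ) (hi1 : 1 ≤ i) :
    ∃ C' : List (ℕ × ℕ),
      IsCover R (S.take (i - 1) ++ S.drop i) C' ∧ C'.length ≤ C.length + 1 := by
  obtain ⟨j, rfl⟩ : ∃ j, i = j + 1 := ⟨i - 1, by omega⟩
  simpa [← List.eraseIdx_eq_take_drop_succ] using hC.exists_eraseIdx j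

/-- If `S` (with `|S| ≥ 2`) has a cover of size `m` w.r.t. `R`, then the string obtained
by deleting the `i`-th character of `S` has a cover of size at most `m + 1`. -/
theorem delete_cover {σ : Type*} (R S : List σ) (C : List (ℕ × ℕ))
    (hC : IsCover R S C) (hS : 2 ≤ S.length)
    (i : ℕ) (hi1 : 1 ≤ i) (hi2 : i ≤ S.length) :
    ∃ C' : List (ℕ × ℕ),
      IsCover R (S.take (i - 1) ++ S.drop i) C' ∧ C'.length ≤ C.length + 1 :=
  delete_cover_general R S C hC i hi1
end
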